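/- Let n ≥ 1 and q ≥ 2, let f_1, …, f_q : ℝⁿ → ℝⁿ be contractions (each f_j is Lipschitz with some constant r_j < 1), and let E ⊆ ℝⁿ be a nonempty compact set with E = ⋃_{j=1}^q f_j(E). Then E, equipped with the subspace topology, is locally connected if and only if E has only finitely many connected components; and in that case every connected component of E is a Peano continuum (i.e. compact, connected and locally connected). -/

import Mathlib

/-!
If `E` is locally connected, its components are open in the compact space `E`, so there are
finitely many of them. Conversely, the finitely many components form a finite cover of `E` by
closed connected sets; applying the contractions `f j` to it and taking all images covers
`E = ⋃ j, f j '' E` again, with diameters shrunk by the factor `ρ = max r j < 1`. Iterating,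
`E` is a finite union of closed connected sets of arbitrarily small diameter, which forces
local connectedness: the pieces through `x` form a connected neighbourhood of `x`, because
the other pieces are finitely many closed sets missing `x`. Intersecting such covers with a
component gives the same property for each component.
-/

open Set Filter Topology
open scoped ENNReal NNReal

section Topology

variable {X : Type*} [TopologicalSpace X]

theorem IsClosed.connectedComponentIn {E : Set X} (hE : IsClosed E) (x : X) :
    IsClosed (connectedComponentIn E x) := by
  by_cases hx : x ∈ E
  · rw [connectedComponentIn_eq_image hx]
    exact hE.isClosedEmbedding_subtypeVal.isClosedMap _ isClosed_connectedComponent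
  · rw [connectedComponentIn_eq_empty hx]
    exact isClosed_empty

theorem finite_connectedComponentIn_image {E : Set X} [CompactSpace E]
    [LocallyConnectedSpace E] : (connectedComponentIn E '' E).Finite := by
  refine (finite_range fun c : ConnectedComponents E =>
    ((↑) '' (ConnectedComponents.mk ⁻¹' {c}) : Set X)).subset ?_
  rintro _ ⟨x, hx, rfl⟩
  refine ⟨ConnectedComponents.mk ⟨x, hx⟩, ?_⟩
  rw [connectedComponentIn_eq_image hx]
  exact congrArg (image Subtype.val) (Set.ext fun _ => ConnectedComponents.coe_eq_coe')

theorem Set.Finite.sUnion_sep_mem_mem_nhdsWithin {𝒮 : Set (Set X)} (hfin : 𝒮.Finite)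
    (hclosed : ∀ S ∈ 𝒮, IsClosed S) {E : Set X} (hE : E ⊆ ⋃₀ 𝒮) (x : X) :
    ⋃₀ {S ∈ 𝒮 | x ∈ S} ∈ 𝓝[E] x := by
  have hW : IsClosed (⋃₀ {S ∈ 𝒮 | x ∉ S}) := by
    rw [sUnion_eq_biUnion]
    exact (hfin.subset (sep_subset _ _)).isClosed_biUnion fun S hS => hclosed S hS.1
  refine mem_nhdsWithin.mpr ⟨_, hW.isOpen_compl, fun ⟨S, hS, hxS⟩ => hS.2 hxS, ?_⟩
  rintro z ⟨hzW, hzE⟩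
  obtain ⟨S, hS, hzS⟩ := hE hzE
  by_cases hxS : x ∈ S
  · exact ⟨S, ⟨hS, hxS⟩, hzS⟩
  · exact absurd ⟨S, ⟨hS, hxS⟩, hzS⟩ hzW

end Topology

section EMetric

variable {X : Type*}

/-- At every scale `ε > 0` this is Sierpiński's property S. -/
def HasFinitePreconnectedCover [PseudoEMetricSpace X] (E : Set X) (ε : ℝ≥0∞) : Prop :=
  ∃ 𝒮 : Set (Set X), 𝒮.Finite ∧ ⋃₀ 𝒮 = E ∧
    ∀ S ∈ 𝒮, IsClosed S ∧ IsPreconnected S ∧ Metric.ediam S ≤ ε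

theorem HasFinitePreconnectedCover.mono [PseudoEMetricSpace X] {E : Set X} {δ ε : ℝ≥0∞}
    (h : HasFinitePreconnectedCover E δ) (hδε : δ ≤ ε) : HasFinitePreconnectedCover E ε := by
  obtain ⟨𝒮, hfin, hcover, h𝒮⟩ := h
  exact ⟨𝒮, hfin, hcover, fun S hS => ⟨(h𝒮 S hS).1, (h𝒮 S hS).2.1, (h𝒮 S hS).2.2.trans hδε⟩⟩

theorem HasFinitePreconnectedCover.connectedComponentIn [PseudoEMetricSpace X] {E : Set X}
    {ε : ℝ≥0∞} (h : HasFinitePreconnectedCover E ε) (x : X) :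
    HasFinitePreconnectedCover (_root_.connectedComponentIn E x) ε := by
  obtain ⟨𝒮, hfin, hcover, h𝒮⟩ := h
  refine ⟨{S ∈ 𝒮 | S ⊆ _root_.connectedComponentIn E x}, hfin.subset (sep_subset _ _),
    subset_antisymm (sUnion_subset fun S hS => hS.2) fun z hz => ?_, fun S hS => h𝒮 S hS.1⟩
  obtain ⟨S, hS, hzS⟩ := hcover.superset (connectedComponentIn_subset E x hz)
  have hSE : S ⊆ E := hcover ▸ subset_sUnion_of_mem hS
  rw [connectedComponentIn_eq hz]
  exact ⟨S, ⟨hS, (h𝒮 S hS).2.1.subset_connectedComponentIn hzS hSE⟩, hzS⟩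

theorem locallyConnectedSpace_of_hasFinitePreconnectedCover [PseudoEMetricSpace X]
    {E : Set X} (h : ∀ ε > 0, HasFinitePreconnectedCover E ε) : LocallyConnectedSpace E := by
  rw [locallyConnectedSpace_iff_connected_subsets]
  rintro ⟨x, hx⟩ U hU
  rw [nhds_subtype_eq_comap, mem_comap] at hU
  obtain ⟨t, ht, htU⟩ := hU
  obtain ⟨ε, hε, hball⟩ := Metric.nhds_basis_closedEBall.mem_iff.mp ht
  obtain ⟨𝒮, hfin, hcover, h𝒮⟩ := h ε hε
  have hAE : ⋃₀ {S ∈ 𝒮 | x ∈ S} ⊆ E := hcover ▸ sUnion_mono (sep_subset _ _)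
  refine ⟨(↑) ⁻¹' ⋃₀ {S ∈ 𝒮 | x ∈ S}, ?_, ?_, ?_⟩
  · exact preimage_coe_mem_nhds_subtype.mpr
      (hfin.sUnion_sep_mem_mem_nhdsWithin (fun S hS => (h𝒮 S hS).1) hcover.superset x)
  · rw [← IsInducing.subtypeVal.isPreconnected_image, Subtype.image_preimage_coe,
      inter_eq_right.mpr hAE]
    exact isPreconnected_sUnion x _ (fun S hS => hS.2) fun S hS => (h𝒮 S hS.1).2.1
  · rintro z ⟨S, ⟨hS, hxS⟩, hzS⟩
    exact htU (hball (Metric.mem_closedEBall.mpr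
      ((Metric.edist_le_ediam_of_mem hzS hxS).trans (h𝒮 S hS).2.2)))

variable [EMetricSpace X]

theorem hasFinitePreconnectedCover_ediam_of_finite_components {E : Set X}
    (hE : IsClosed E) (hfin : (connectedComponentIn E '' E).Finite) :
    HasFinitePreconnectedCover E (Metric.ediam E) := by
  refine ⟨_, hfin, subset_antisymm ?_ fun x hx => ⟨_, mem_image_of_mem _ hx,
    mem_connectedComponentIn hx⟩, ?_⟩
  · exact sUnion_subset <| forall_mem_image.mpr fun x _ => connectedComponentIn_subset E x
  · exact forall_mem_image.mpr fun x _ => ⟨hE.connectedComponentIn x,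
      isPreconnected_connectedComponentIn, Metric.ediam_mono (connectedComponentIn_subset E x)⟩

theorem HasFinitePreconnectedCover.mul_of_selfSimilar {ι : Type*} [Finite ι] {f : ι → X → X}
    {K : ℝ≥0} (hf : ∀ j, LipschitzWith K (f j)) {E : Set X} (hEc : IsCompact E)
    (hE : E = ⋃ j, f j '' E) {d : ℝ≥0∞} (h : HasFinitePreconnectedCover E d) :
    HasFinitePreconnectedCover E (K * d) := by
  obtain ⟨𝒮, hfin, hcover, h𝒮⟩ := h
  refine ⟨⋃ j, image (f j) '' 𝒮, finite_iUnion fun j => hfin.image _, ?_, ?_⟩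
  · simp only [sUnion_iUnion, sUnion_image, ← image_iUnion₂, ← sUnion_eq_biUnion, hcover]
    exact hE.symm
  · simp only [mem_iUnion, mem_image]
    rintro _ ⟨j, S, hS, rfl⟩
    obtain ⟨hSc, hSp, hSd⟩ := h𝒮 S hS
    have hScpt : IsCompact S := hEc.of_isClosed_subset hSc (hcover ▸ subset_sUnion_of_mem hS)
    exact ⟨(hScpt.image (hf j).continuous).isClosed,
      hSp.image _ (hf j).continuous.continuousOn,
      ((hf j).ediam_image_le S).trans (mul_le_mul_right hSd _)⟩

theorem HasFinitePreconnectedCover.forall_pos_of_selfSimilar {ι : Type*} [Finite ι]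
    {f : ι → X → X} {K : ℝ≥0} (hK : K < 1) (hf : ∀ j, LipschitzWith K (f j)) {E : Set X}
    (hEc : IsCompact E) (hE : E = ⋃ j, f j '' E) {d : ℝ≥0∞} (hd : d ≠ ∞)
    (h : HasFinitePreconnectedCover E d) : ∀ ε > 0, HasFinitePreconnectedCover E ε := by
  have hiter : ∀ k : ℕ, HasFinitePreconnectedCover E ((K : ℝ≥0∞) ^ k * d) := by
    intro k
    induction k with
    | zero => simpa using h
    | succ k ih => simpa [pow_succ', mul_assoc] using ih.mul_of_selfSimilar hf hEc hE
  have hlim : Tendsto (fun k : ℕ => (K : ℝ≥0∞) ^ k * d) atTop (𝓝 0) := by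
    simpa using ENNReal.Tendsto.mul_const
      (ENNReal.tendsto_pow_atTop_nhds_zero_of_lt_one (ENNReal.coe_lt_one_iff.mpr hK)) (Or.inr hd)
  intro ε hε
  obtain ⟨k, hk⟩ := (hlim.eventually_lt_const hε).exists
  exact (hiter k).mono hk.le

end EMetric

theorem self_similar_locallyConnected_iff_finitely_many_components
    (n q : ℕ)
    (f : Fin q → EuclideanSpace ℝ (Fin n) → EuclideanSpace ℝ (Fin n))
    (r : Fin q → NNReal) (hr : ∀ j, r j < 1)
    (hf : ∀ j, LipschitzWith (r j) (f j))
    (E : Set (EuclideanSpace ℝ (Fin n)))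
    (hEc : IsCompact E)
    (hE : E = ⋃ j, f j '' E) :
    (LocallyConnectedSpace E ↔
      {C : Set (EuclideanSpace ℝ (Fin n)) | ∃ x ∈ E, C = connectedComponentIn E x}.Finite)
    ∧ (LocallyConnectedSpace E →
        ∀ x ∈ E, IsCompact (connectedComponentIn E x)
          ∧ IsConnected (connectedComponentIn E x)
          ∧ LocallyConnectedSpace (connectedComponentIn E x)) := by
  have : CompactSpace E := isCompact_iff_compactSpace.mp hEc
  have hcomponents : {C | ∃ x ∈ E, C = connectedComponentIn E x} = connectedComponentIn E '' E := by
    ext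
    simp [eq_comm]
  have hρ : Finset.univ.sup r < 1 := Finset.sup_lt_iff zero_lt_one |>.mpr fun j _ => hr j
  have hfρ : ∀ j, LipschitzWith (Finset.univ.sup r) (f j) :=
    fun j => (hf j).weaken (Finset.le_sup (Finset.mem_univ j))
  have hfine (hfin : (connectedComponentIn E '' E).Finite) :
      ∀ ε > 0, HasFinitePreconnectedCover E ε :=
    (hasFinitePreconnectedCover_ediam_of_finite_components hEc.isClosed hfin
      ).forall_pos_of_selfSimilar hρ hfρ hEc hE hEc.isBounded.ediam_ne_top
  rw [hcomponents]
  refine ⟨⟨fun _ => finite_connectedComponentIn_image,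
    fun hfin => locallyConnectedSpace_of_hasFinitePreconnectedCover (hfine hfin)⟩,
    fun _ x hx => ⟨?_, isConnected_connectedComponentIn_iff.mpr hx, ?_⟩⟩
  · exact hEc.of_isClosed_subset (hEc.isClosed.connectedComponentIn x)
      (connectedComponentIn_subset E x)
  · exact locallyConnectedSpace_of_hasFinitePreconnectedCover fun ε hε =>
      (hfine finite_connectedComponentIn_image ε hε).connectedComponentIn x
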